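/- arXiv:1502.07974 — 3 statements merged into one kernel-verified Lean document; each statement's English description precedes it below -/
import Mathlib

section
/- Suppose t < f⋆, let x_t minimize γ(t,x) = (1/2)((f_0(x)−t)_+)² + (1/2)∑((f_i(x))_+)² with f_0, f_i continuously differentiable and convex, and assume f_0(x_t) > t. Define μ_i = (f_i(x_t))_+ / (f_0(x_t) − t). Then μ ≥ 0 and ∇f_0(x_t) + ∑_{i=1}^m μ_i ∇f_i(x_t) = 0, and consequently the dual bound f_0(x_t) + ∑_{i=1}^m μ_i f_i(x_t) ≤ f⋆ holds, where f⋆ = inf{f_0(x) : f_i(x) ≤ 0 ∀i}. -/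
/-!
Minimizing the penalty `γ(t, ·)` is an unconstrained smooth problem, so its gradient vanishes
at `x_t`; since `(u₊)²` has derivative `2u₊`, this reads
`(f₀(x_t) - t) ∇f₀(x_t) + ∑ (fᵢ(x_t))₊ ∇fᵢ(x_t) = 0`, and dividing by `f₀(x_t) - t > 0` gives the
multipliers `μ`. The dual bound is then weak duality: by the gradient inequality for convex
functions, the Lagrangian `f₀ + ∑ μᵢ fᵢ` is minimized at its stationary point `x_t`, and it lies
below `f₀` on the feasible set.
-/

open Set Filter Asymptotics

theorem hasDerivAt_max_zero_sq (y : ℝ) :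
    HasDerivAt (fun u : ℝ => max u 0 ^ 2) (2 * max y 0) y := by
  rw [hasDerivAt_iff_isLittleO_nhds_zero]
  refine IsBigO.trans_isLittleO (g := fun h : ℝ => h ^ 2) ?_ (isLittleO_pow_id one_lt_two)
  refine IsBigO.of_bound 1 (Eventually.of_forall fun h => ?_)
  rw [one_mul, Real.norm_eq_abs, Real.norm_eq_abs, abs_of_nonneg (sq_nonneg h), abs_le,
    smul_eq_mul]
  rcases le_total (y + h) 0 with hyh | hyh <;> rcases le_total y 0 with hy | hy <;>
    simp only [max_eq_left, max_eq_right, *] <;> constructor <;> nlinarith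

section

variable {E ι : Type*} [NormedAddCommGroup E] [NormedSpace ℝ E]

theorem ConvexOn.add_fderiv_sub_le {f : E → ℝ} {f' : E →L[ℝ] ℝ} {x : E}
    (hc : ConvexOn ℝ univ f) (hd : HasFDerivAt f f' x) (y : E) :
    f x + f' (y - x) ≤ f y := by
  let L : ℝ →ᵃ[ℝ] E := AffineMap.lineMap x y
  have hL : (L : ℝ → E) = fun s => s • (y - x) + x :=
    funext (AffineMap.lineMap_apply_module' x y)
  have hline : HasDerivAt L (y - x) 0 := by
    simpa [hL] using ((hasDerivAt_id (0 : ℝ)).smul_const (y - x)).add_const x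
  have hg : HasDerivAt (f ∘ L) (f' (y - x)) 0 :=
    (by simpa [hL] using hd : HasFDerivAt f f' (L 0)).comp_hasDerivAt 0 hline
  have hconv : ConvexOn ℝ univ (f ∘ L) := by simpa using hc.comp_affineMap L
  have hslope := hconv.le_slope_of_hasDerivAt (mem_univ 0) (mem_univ 1) one_pos hg
  simp only [slope_def_field, Function.comp, hL, zero_smul, zero_add, one_smul, sub_add_cancel,
    sub_zero, div_one] at hslope
  linarith

variable [Fintype ι] {f0 : E → ℝ} {f : ι → E → ℝ} {f0' : E →L[ℝ] ℝ} {f' : ι → E →L[ℝ] ℝ}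
  {x : E}

noncomputable def quadPenalty (f0 : E → ℝ) (f : ι → E → ℝ) (t : ℝ) (x : E) : ℝ :=
  (1/2 : ℝ) * (max (f0 x - t) 0) ^ 2 + (1/2 : ℝ) * ∑ i, (max (f i x) 0) ^ 2

theorem hasFDerivAt_quadPenalty (t : ℝ) (hf0 : HasFDerivAt f0 f0' x)
    (hf : ∀ i, HasFDerivAt (f i) (f' i) x) :
    HasFDerivAt (quadPenalty f0 f t)
      (max (f0 x - t) 0 • f0' + ∑ i, max (f i x) 0 • f' i) x := by
  have h0 := (hasDerivAt_max_zero_sq _).comp_hasFDerivAt x (hf0.sub_const t)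
  have hsum := HasFDerivAt.fun_sum fun i (_ : i ∈ Finset.univ) =>
    (hasDerivAt_max_zero_sq _).comp_hasFDerivAt x (hf i)
  refine ((h0.const_mul (1/2 : ℝ)).add (hsum.const_mul (1/2 : ℝ))).congr_fderiv ?_
  simp only [Finset.smul_sum, smul_smul, one_div, inv_mul_cancel_left₀ (two_ne_zero' ℝ)]

theorem add_sum_smul_eq_zero_of_isMin_quadPenalty {t : ℝ} (hf0 : HasFDerivAt f0 f0' x)
    (hf : ∀ i, HasFDerivAt (f i) (f' i) x)
    (hmin : ∀ y, quadPenalty f0 f t x ≤ quadPenalty f0 f t y) (ht : t < f0 x) :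
    f0' + ∑ i, (max (f i x) 0 / (f0 x - t)) • f' i = 0 := by
  have hpos : 0 < f0 x - t := sub_pos.mpr ht
  have hstat : max (f0 x - t) 0 • f0' + ∑ i, max (f i x) 0 • f' i = 0 :=
    IsLocalMin.hasFDerivAt_eq_zero (Eventually.of_forall hmin) (hasFDerivAt_quadPenalty t hf0 hf)
  simpa only [max_eq_left hpos.le, smul_add, smul_smul, inv_mul_cancel₀ hpos.ne', one_smul,
    Finset.smul_sum, smul_zero, div_eq_inv_mul] using congrArg ((f0 x - t)⁻¹ • ·) hstat

theorem lagrangian_le_of_stationary {μ : ι → ℝ} (hc0 : ConvexOn ℝ univ f0)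
    (hc : ∀ i, ConvexOn ℝ univ (f i)) (hf0 : HasFDerivAt f0 f0' x)
    (hf : ∀ i, HasFDerivAt (f i) (f' i) x) (hμ : ∀ i, 0 ≤ μ i)
    (hstat : f0' + ∑ i, μ i • f' i = 0) {y : E} (hy : ∀ i, f i y ≤ 0) :
    f0 x + ∑ i, μ i * f i x ≤ f0 y := by
  have hdir : f0' (y - x) + ∑ i, μ i * f' i (y - x) = 0 := by
    simpa using congrArg (· (y - x)) hstat
  calc f0 x + ∑ i, μ i * f i x
      = f0 x + f0' (y - x) + ∑ i, μ i * (f i x + f' i (y - x)) := by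
        simp only [mul_add, Finset.sum_add_distrib]; linarith
    _ ≤ f0 y + ∑ i, μ i * f i y :=
        add_le_add (hc0.add_fderiv_sub_le hf0 y) <| Finset.sum_le_sum fun i _ =>
          mul_le_mul_of_nonneg_left ((hc i).add_fderiv_sub_le (hf i) y) (hμ i)
    _ ≤ f0 y := by
        simpa using Finset.sum_nonpos fun i _ => mul_nonpos_of_nonneg_of_nonpos (hμ i) (hy i)

end

theorem stmt_10_general (n m : ℕ) (f0 : (Fin n → ℝ) → ℝ) (f : Fin m → (Fin n → ℝ) → ℝ)
    (hf0 : ConvexOn ℝ Set.univ f0) (hf : ∀ i, ConvexOn ℝ Set.univ (f i))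
    (hf0' : ContDiff ℝ 1 f0) (hf' : ∀ i, ContDiff ℝ 1 (f i))
    (γ : ℝ → (Fin n → ℝ) → ℝ)
    (hγ : γ = fun t x => (1/2 : ℝ) * (max (f0 x - t) 0) ^ 2
        + (1/2 : ℝ) * ∑ i, (max (f i x) 0) ^ 2)
    (fstar : ℝ)
    (hfstar : IsGLB {y | ∃ x, (∀ i, f i x ≤ 0) ∧ f0 x = y} fstar)
    (t : ℝ)
    (xt : Fin n → ℝ) (hxt : ∀ x, γ t xt ≤ γ t x)
    (hgt : t < f0 xt)
    (μ : Fin m → ℝ) (hμ : ∀ i, μ i = max (f i xt) 0 / (f0 xt - t)) :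
    (∀ i, 0 ≤ μ i) ∧
    (fderiv ℝ f0 xt + ∑ i, μ i • fderiv ℝ (f i) xt = 0) ∧
    f0 xt + ∑ i, μ i * f i xt ≤ fstar := by
  have hd0 := (hf0'.differentiable one_ne_zero xt).hasFDerivAt
  have hd := fun i => ((hf' i).differentiable one_ne_zero xt).hasFDerivAt
  have hμ_nonneg : ∀ i, 0 ≤ μ i := fun i => by
    rw [hμ i]; exact div_nonneg (le_max_right _ _) (sub_pos.mpr hgt).le
  have hkkt : fderiv ℝ f0 xt + ∑ i, μ i • fderiv ℝ (f i) xt = 0 := by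
    subst hγ
    simpa only [hμ] using add_sum_smul_eq_zero_of_isMin_quadPenalty hd0 hd hxt hgt
  refine ⟨hμ_nonneg, hkkt, hfstar.2 ?_⟩
  rintro _ ⟨y, hy, rfl⟩
  exact lagrangian_le_of_stationary hf0 hf hd0 hd hμ_nonneg hkkt hy

theorem stmt_10 (n m : ℕ) (f0 : (Fin n → ℝ) → ℝ) (f : Fin m → (Fin n → ℝ) → ℝ)
    (hf0 : ConvexOn ℝ Set.univ f0) (hf : ∀ i, ConvexOn ℝ Set.univ (f i))
    (hf0' : ContDiff ℝ 1 f0) (hf' : ∀ i, ContDiff ℝ 1 (f i))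
    (γ : ℝ → (Fin n → ℝ) → ℝ)
    (hγ : γ = fun t x => (1/2 : ℝ) * (max (f0 x - t) 0) ^ 2
        + (1/2 : ℝ) * ∑ i, (max (f i x) 0) ^ 2)
    (fstar : ℝ)
    (hfstar : IsGLB {y | ∃ x, (∀ i, f i x ≤ 0) ∧ f0 x = y} fstar)
    (t : ℝ) (ht : t < fstar)
    (xt : Fin n → ℝ) (hxt : ∀ x, γ t xt ≤ γ t x)
    (hgt : t < f0 xt)
    (μ : Fin m → ℝ) (hμ : ∀ i, μ i = max (f i xt) 0 / (f0 xt - t)) :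
    (∀ i, 0 ≤ μ i) ∧
    (fderiv ℝ f0 xt + ∑ i, μ i • fderiv ℝ (f i) xt = 0) ∧
    f0 xt + ∑ i, μ i * f i xt ≤ fstar :=
  stmt_10_general n m f0 f hf0 hf hf0' hf' γ hγ fstar hfstar t xt hxt hgt μ hμ
end

section
/- Let f_0, f_1, ..., f_m : ℝ^n → ℝ be convex, let x_F be feasible (f_i(x_F) ≤ 0 for all i) and x_I satisfy f_0(x_I) < f_0(x_F). Suppose Γ ≥ 0 satisfies f_i(x_I) ≤ −Γ f_i(x_F) for all i = 1,...,m. Then f⋆ ≤ (Γ/(Γ+1)) f_0(x_F) + (1/(Γ+1)) f_0(x_I), where f⋆ = inf{f_0(x) : f_i(x) ≤ 0, i=1,...,m}. -/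
/-!
The point `x̄ = (Γ • x_F + x_I) / (Γ + 1)` is a convex combination of `x_F` and `x_I`. For each
constraint, convexity gives `(Γ + 1) f_i(x̄) ≤ Γ f_i(x_F) + f_i(x_I) ≤ 0`, so `x̄` is feasible and
`f⋆ ≤ f_0(x̄)`; convexity of `f_0` bounds `f_0(x̄)` by the same combination of `f_0(x_F)` and
`f_0(x_I)`.
-/

section

variable {𝕜 E : Type*} [Field 𝕜] [LinearOrder 𝕜] [IsStrictOrderedRing 𝕜]
  [AddCommMonoid E] [Module 𝕜 E]

theorem ConvexOn.map_div_add_one_combo_le {g : E → 𝕜} (hg : ConvexOn 𝕜 Set.univ g) {Γ : 𝕜}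
    (hΓ : 0 ≤ Γ) (x y : E) :
    g ((Γ / (Γ + 1)) • x + (1 / (Γ + 1)) • y) ≤ Γ / (Γ + 1) * g x + 1 / (Γ + 1) * g y := by
  have hpos : 0 < Γ + 1 := by linarith
  exact hg.2 (Set.mem_univ x) (Set.mem_univ y) (by positivity) (by positivity)
    (by rw [← add_div, div_self hpos.ne'])

theorem div_add_one_combo_nonpos {Γ a b : 𝕜} (hΓ : 0 ≤ Γ) (hb : b ≤ -Γ * a) :
    Γ / (Γ + 1) * a + 1 / (Γ + 1) * b ≤ 0 := by
  have hpos : 0 < Γ + 1 := by linarith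
  rw [div_mul_eq_mul_div, div_mul_eq_mul_div, ← add_div]
  exact div_nonpos_of_nonpos_of_nonneg (by linarith) hpos.le

end

theorem stmt_12_general (n m : ℕ) (f0 : (Fin n → ℝ) → ℝ) (f : Fin m → (Fin n → ℝ) → ℝ)
    (hf0 : ConvexOn ℝ Set.univ f0) (hf : ∀ i, ConvexOn ℝ Set.univ (f i))
    (xF xI : Fin n → ℝ)
    (Γ : ℝ) (hΓ : 0 ≤ Γ)
    (hΓi : ∀ i, f i xI ≤ -Γ * f i xF)
    (fstar : ℝ)
    (hfstar : IsGLB {y | ∃ x, (∀ i, f i x ≤ 0) ∧ f0 x = y} fstar) :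
    fstar ≤ (Γ / (Γ + 1)) * f0 xF + (1 / (Γ + 1)) * f0 xI := by
  set x := (Γ / (Γ + 1)) • xF + (1 / (Γ + 1)) • xI
  have hfeas : ∀ i, f i x ≤ 0 := fun i =>
    ((hf i).map_div_add_one_combo_le hΓ xF xI).trans (div_add_one_combo_nonpos hΓ (hΓi i))
  calc fstar ≤ f0 x := hfstar.1 ⟨x, hfeas, rfl⟩
    _ ≤ _ := hf0.map_div_add_one_combo_le hΓ xF xI

theorem stmt_12 (n m : ℕ) (f0 : (Fin n → ℝ) → ℝ) (f : Fin m → (Fin n → ℝ) → ℝ)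
    (hf0 : ConvexOn ℝ Set.univ f0) (hf : ∀ i, ConvexOn ℝ Set.univ (f i))
    (xF xI : Fin n → ℝ)
    (hxF : ∀ i, f i xF ≤ 0)
    (hlt : f0 xI < f0 xF)
    (Γ : ℝ) (hΓ : 0 ≤ Γ)
    (hΓi : ∀ i, f i xI ≤ -Γ * f i xF)
    (fstar : ℝ)
    (hfstar : IsGLB {y | ∃ x, (∀ i, f i x ≤ 0) ∧ f0 x = y} fstar) :
    fstar ≤ (Γ / (Γ + 1)) * f0 xF + (1 / (Γ + 1)) * f0 xI :=
  stmt_12_general n m f0 f hf0 hf xF xI Γ hΓ hΓi fstar hfstar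
end

section
/- Let α : ℝ^n × ℝ^m → ℝ^n, g : ℝ^n × ℝ^m → ℝ, f : ℝ^n → ℝ, and suppose S = {x : f(x) ≤ 0} is constrained controlled invariant: for every x ∈ S there exists u with g(x,u) ≤ 0 and α(x,u) ∈ S. Given a trajectory (x_k, u_k)_{k=0}^{N} with x_{k+1} = α(x_k,u_k), g(x_k,u_k) ≤ 0 for k = 0,...,N−1, and f(x_N) ≤ 0, there exists a shifted trajectory (x̄_k, ū_k) with x̄_0 = x_1, x̄_k = x_{k+1} for k = 0,...,N−1, satisfying x̄_{k+1} = α(x̄_k, ū_k), g(x̄_k, ū_k) ≤ 0 for k=0,...,N−1, f(x̄_{N−1}) ≤ 0, f(x̄_N) ≤ 0, and ∑_{k=1}^{N−1} max{f(x̄_k),0} = ∑_{k=1}^{N−1} max{f(x_k),0} − max{f(x_1),0}. -/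
/-!
Append to the given trajectory one step from `x N` with an input `v` that keeps `S`
invariant; the extended trajectory is feasible on horizon `N + 1`, and dropping its first
step gives the shifted trajectory. In the cost, the term at `x 1` leaves the window and the
term at `x N` enters it, and the latter vanishes because `x N ∈ S`.
-/

open Finset

theorem Finset.sum_Ico_one_succ_add {M : Type*} [AddCommMonoid M] (a : ℕ → M) {N : ℕ}
    (hN : 1 ≤ N) : ∑ k ∈ Ico 1 N, a (k + 1) + a 1 = ∑ k ∈ Ico 1 N, a k + a N := by
  induction N, hN using Nat.le_induction with
  | base => simp
  | succ N hN ih =>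
    rw [sum_Ico_succ_top hN, sum_Ico_succ_top hN, add_right_comm, ih]

section Extension

variable {X U : Type*} (α : X → U → X) (g : X → U → ℝ) (x : ℕ → X) (u : ℕ → U)
  (N : ℕ) (v : U)

def extendState : ℕ → X := fun k => if k ≤ N then x k else α (x N) v

def extendInput : ℕ → U := fun k => if k < N then u k else v

variable {α x N v}

theorem extendState_of_le {k : ℕ} (hk : k ≤ N) : extendState α x N v k = x k :=
  if_pos hk

theorem extendState_succ_self : extendState α x N v (N + 1) = α (x N) v :=
  if_neg N.lt_succ_self.not_ge

theorem extendState_dynamics (hdyn : ∀ k < N, x (k + 1) = α (x k) (u k)) :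
    ∀ k < N + 1,
      extendState α x N v (k + 1) = α (extendState α x N v k) (extendInput u N v k) := by
  intro k hk
  rcases Nat.lt_succ_iff_lt_or_eq.mp hk with hk | rfl
  · rw [extendState_of_le hk, extendState_of_le hk.le, extendInput, if_pos hk, hdyn k hk]
  · rw [extendState_succ_self, extendState_of_le le_rfl, extendInput, if_neg (lt_irrefl _)]

theorem extendState_constraint (hcon : ∀ k < N, g (x k) (u k) ≤ 0) (hv : g (x N) v ≤ 0) :
    ∀ k < N + 1, g (extendState α x N v k) (extendInput u N v k) ≤ 0 := by
  intro k hk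
  rcases Nat.lt_succ_iff_lt_or_eq.mp hk with hk | rfl
  · rw [extendState_of_le hk.le, extendInput, if_pos hk]
    exact hcon k hk
  · rwa [extendState_of_le le_rfl, extendInput, if_neg (lt_irrefl _)]

end Extension

theorem stmt_16 (n m N : ℕ) (hN : 1 ≤ N)
    (α : (Fin n → ℝ) → (Fin m → ℝ) → (Fin n → ℝ))
    (g : (Fin n → ℝ) → (Fin m → ℝ) → ℝ)
    (f : (Fin n → ℝ) → ℝ)
    (hinv : ∀ z, f z ≤ 0 → ∃ v, g z v ≤ 0 ∧ f (α z v) ≤ 0)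
    (x : ℕ → (Fin n → ℝ)) (u : ℕ → (Fin m → ℝ))
    (hdyn : ∀ k < N, x (k + 1) = α (x k) (u k))
    (hcon : ∀ k < N, g (x k) (u k) ≤ 0)
    (hterm : f (x N) ≤ 0) :
    ∃ (xb : ℕ → (Fin n → ℝ)) (ub : ℕ → (Fin m → ℝ)),
      xb 0 = x 1 ∧
      (∀ k < N, xb k = x (k + 1)) ∧
      (∀ k < N, xb (k + 1) = α (xb k) (ub k)) ∧
      (∀ k < N, g (xb k) (ub k) ≤ 0) ∧
      f (xb (N - 1)) ≤ 0 ∧ f (xb N) ≤ 0 ∧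
      (∑ k ∈ Finset.Ico 1 N, max (f (xb k)) 0)
        = (∑ k ∈ Finset.Ico 1 N, max (f (x k)) 0) - max (f (x 1)) 0 := by
  obtain ⟨v, hgv, hfv⟩ := hinv (x N) hterm
  have hdynExt := extendState_dynamics u hdyn (v := v)
  have hconExt := extendState_constraint g u hcon hgv (α := α)
  have hshift : ∀ k < N, extendState α x N v (k + 1) = x (k + 1) :=
    fun k hk => extendState_of_le hk
  have hcost := sum_Ico_one_succ_add (fun k => max (f (x k)) 0) hN
  refine ⟨fun k => extendState α x N v (k + 1), fun k => extendInput u N v (k + 1),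
    hshift 0 hN, hshift, fun k hk => hdynExt (k + 1) (by omega),
    fun k hk => hconExt (k + 1) (by omega), ?_, ?_, ?_⟩ <;> beta_reduce
  · rwa [hshift (N - 1) (by omega), Nat.sub_add_cancel hN]
  · rwa [extendState_succ_self]
  · rw [sum_congr rfl fun k hk => by rw [hshift k (mem_Ico.mp hk).2]]
    rw [max_eq_right hterm, add_zero] at hcost
    exact eq_sub_of_add_eq hcost
end
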